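/- Let n ≥ 1 and for j = 1, …, n let A_j : ℝ → Mat₂(ℝ) be differentiable matrix curves with det A_j(t) = 1 for all t. Fix t ∈ ℝ and v ∈ ℝ² \ {0}. Set P_0(t) := I, P_j(t) := A_j(t) ⋯ A_1(t), M(t) := P_n(t), and let u_{j−1} := P_{j−1}(t)v / ‖P_{j−1}(t)v‖. Then ((M(t)v) ∧ (M'(t)v)) / ‖M(t)v‖² = Σ_{j=1}^{n} (‖P_j(t)v‖ / ‖M(t)v‖)² · ((A_j(t)u_{j−1}) ∧ (A_j'(t)u_{j−1})) / ‖A_j(t)u_{j−1}‖², where M'(t) is the derivative of the product curve M at t. -/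

import Mathlib

open Matrix Filter Topology

noncomputable section

/-- The wedge product `u ∧ w := u₁w₂ − u₂w₁` of two vectors in `ℝ²`. -/
def wedge (u w : Fin 2 → ℝ) : ℝ := u 0 * w 1 - u 1 * w 0

/-- The Euclidean norm on `ℝ²`. -/
def vnorm (v : Fin 2 → ℝ) : ℝ := Real.sqrt (v 0 ^ 2 + v 1 ^ 2)

/-! Differentiating `M = A_n P_{n-1}` gives `M' = A_n' P_{n-1} + A_n P_{n-1}'`, and since
`det A_n = 1` the second summand contributes `(P_{n-1} v) ∧ (P_{n-1}' v)` unchanged, so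
`(M v) ∧ (M' v)` telescopes into `∑ⱼ (A_j w_j) ∧ (A_j' w_j)` with `w_j = P_{j-1} v`. Each summand
is quadratic in `w_j`, so replacing `w_j` by `u_{j-1} = w_j / ‖w_j‖` rescales the wedge and
`‖A_j w_j‖²` by the same factor, which gives the weights `(‖P_j v‖ / ‖M v‖)²`. -/

lemma wedge_add_right (u a b : Fin 2 → ℝ) : wedge u (a + b) = wedge u a + wedge u b := by
  simp only [wedge, Pi.add_apply]
  ring

lemma wedge_smul_smul (c : ℝ) (a b : Fin 2 → ℝ) : wedge (c • a) (c • b) = c ^ 2 * wedge a b := by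
  simp only [wedge, Pi.smul_apply, smul_eq_mul]
  ring

lemma wedge_mulVec_mulVec (B : Matrix (Fin 2) (Fin 2) ℝ) (u w : Fin 2 → ℝ) :
    wedge (B *ᵥ u) (B *ᵥ w) = B.det * wedge u w := by
  simp only [wedge, mulVec, dotProduct, det_fin_two, Fin.sum_univ_two]
  ring

lemma vnorm_eq_norm_toLp (v : Fin 2 → ℝ) :
    vnorm v = ‖(WithLp.toLp 2 v : EuclideanSpace ℝ (Fin 2))‖ := by
  simp [vnorm, EuclideanSpace.norm_eq, Fin.sum_univ_two]

lemma vnorm_eq_zero {v : Fin 2 → ℝ} : vnorm v = 0 ↔ v = 0 := by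
  simp [vnorm_eq_norm_toLp]

lemma vnorm_smul (c : ℝ) (v : Fin 2 → ℝ) : vnorm (c • v) = |c| * vnorm v := by
  simp only [vnorm_eq_norm_toLp, WithLp.toLp_smul, norm_smul, Real.norm_eq_abs]

lemma wedge_div_sq_eq_of_ne_zero {c : ℝ} (hc : c ≠ 0) (a b : Fin 2 → ℝ) (N : ℝ) :
    wedge a b / N ^ 2 = (vnorm a / N) ^ 2 * (wedge (c • a) (c • b) / vnorm (c • a) ^ 2) := by
  rcases eq_or_ne a 0 with rfl | ha
  · simp [wedge]
  have hna : vnorm a ≠ 0 := vnorm_eq_zero.not.mpr ha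
  rw [wedge_smul_smul, vnorm_smul, mul_pow, sq_abs]
  field_simp

lemma wedge_mulVec_div_sq_eq_normalized (B B' : Matrix (Fin 2) (Fin 2) ℝ) (w : Fin 2 → ℝ)
    (N : ℝ) :
    wedge (B *ᵥ w) (B' *ᵥ w) / N ^ 2 =
      (vnorm (B *ᵥ w) / N) ^ 2 *
        (wedge (B *ᵥ ((vnorm w)⁻¹ • w)) (B' *ᵥ ((vnorm w)⁻¹ • w)) /
          vnorm (B *ᵥ ((vnorm w)⁻¹ • w)) ^ 2) := by
  rcases eq_or_ne w 0 with rfl | hw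
  · simp [wedge]
  rw [mulVec_smul, mulVec_smul]
  exact wedge_div_sq_eq_of_ne_zero (inv_ne_zero (vnorm_eq_zero.not.mpr hw)) _ _ _

section PartialProd

variable {R : Type*} [Monoid R]

def partialProd (A : ℕ → ℝ → R) (j : ℕ) (s : ℝ) : R :=
  (List.ofFn fun i : Fin j => A (i : ℕ) s).reverse.prod

@[simp]
lemma partialProd_zero (A : ℕ → ℝ → R) (s : ℝ) : partialProd A 0 s = 1 := rfl

lemma partialProd_succ (A : ℕ → ℝ → R) (j : ℕ) (s : ℝ) :
    partialProd A (j + 1) s = A j s * partialProd A j s := by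
  rw [partialProd, partialProd, List.ofFn_succ', List.concat_eq_append, List.reverse_append,
    List.reverse_singleton, List.singleton_append, List.prod_cons, Fin.val_last]
  rfl

end PartialProd

section Derivative

variable {m : Type*} [Fintype m]

lemma hasDerivAt_matrix_mul_apply {P Q : ℝ → Matrix m m ℝ} {P' Q' : Matrix m m ℝ} {t : ℝ}
    (hP : ∀ i k, HasDerivAt (fun s => P s i k) (P' i k) t)
    (hQ : ∀ i k, HasDerivAt (fun s => Q s i k) (Q' i k) t) (i k : m) :
    HasDerivAt (fun s => (P s * Q s) i k) ((P' * Q t + P t * Q') i k) t := by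
  simp only [Matrix.add_apply, mul_apply, ← Finset.sum_add_distrib]
  exact HasDerivAt.fun_sum fun l _ => (hP i l).fun_mul (hQ l k)

def partialProdDeriv [DecidableEq m] (A : ℕ → ℝ → Matrix m m ℝ) (A' : ℕ → Matrix m m ℝ)
    (t : ℝ) : ℕ → Matrix m m ℝ
  | 0 => 0
  | j + 1 => A' j * partialProd A j t + A j t * partialProdDeriv A A' t j

lemma hasDerivAt_partialProd_apply [DecidableEq m] {A : ℕ → ℝ → Matrix m m ℝ}
    {A' : ℕ → Matrix m m ℝ} {t : ℝ} {n : ℕ}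
    (hA : ∀ j < n, ∀ i k, HasDerivAt (fun s => A j s i k) (A' j i k) t) (i k : m) :
    HasDerivAt (fun s => partialProd A n s i k) (partialProdDeriv A A' t n i k) t := by
  induction n generalizing i k with
  | zero => simpa [partialProdDeriv] using hasDerivAt_const t ((1 : Matrix m m ℝ) i k)
  | succ n ih =>
    simp only [partialProd_succ, partialProdDeriv]
    exact hasDerivAt_matrix_mul_apply (hA n n.lt_succ_self)
      (ih fun j hj => hA j (hj.trans n.lt_succ_self)) i k

end Derivative

lemma wedge_partialProd_mulVec_deriv {A : ℕ → ℝ → Matrix (Fin 2) (Fin 2) ℝ}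
    (A' : ℕ → Matrix (Fin 2) (Fin 2) ℝ) {t : ℝ} {n : ℕ} (hdet : ∀ j < n, (A j t).det = 1)
    (v : Fin 2 → ℝ) :
    wedge (partialProd A n t *ᵥ v) (partialProdDeriv A A' t n *ᵥ v) =
      ∑ j ∈ Finset.range n,
        wedge (A j t *ᵥ (partialProd A j t *ᵥ v)) (A' j *ᵥ (partialProd A j t *ᵥ v)) := by
  induction n with
  | zero => simp [partialProdDeriv, wedge]
  | succ n ih =>
    rw [Finset.sum_range_succ, ← ih fun j hj => hdet j (hj.trans n.lt_succ_self),
      partialProd_succ, partialProdDeriv, add_mulVec, ← mulVec_mulVec, ← mulVec_mulVec,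
      ← mulVec_mulVec, wedge_add_right, wedge_mulVec_mulVec, hdet n n.lt_succ_self, one_mul,
      add_comm]

/-- Indices are shifted: `A 0, …, A (n-1)` are the paper's `A_1, …, A_n`, `A' j` is the
derivative of `A j` at `t`, `P j s = A (j-1) s ⋯ A 0 s`, and `M = P n`. -/
theorem stmt_2_general (n : ℕ) (A : ℕ → ℝ → Matrix (Fin 2) (Fin 2) ℝ)
    (A' : ℕ → Matrix (Fin 2) (Fin 2) ℝ) (t : ℝ)
    (hdet : ∀ j < n, ∀ s : ℝ, (A j s).det = 1)
    (hderiv : ∀ j < n, ∀ i k, HasDerivAt (fun s => A j s i k) (A' j i k) t)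
    (P : ℕ → ℝ → Matrix (Fin 2) (Fin 2) ℝ)
    (hP : ∀ j s, P j s = (List.ofFn fun i : Fin j => A (i : ℕ) s).reverse.prod)
    (M' : Matrix (Fin 2) (Fin 2) ℝ)
    (hM' : ∀ i k, HasDerivAt (fun s => P n s i k) (M' i k) t)
    (v : Fin 2 → ℝ) :
    wedge ((P n t).mulVec v) (M'.mulVec v) / vnorm ((P n t).mulVec v) ^ 2 =
      ∑ j ∈ Finset.range n,
        (vnorm ((P (j + 1) t).mulVec v) / vnorm ((P n t).mulVec v)) ^ 2 *
          (wedge ((A j t).mulVec ((vnorm ((P j t).mulVec v))⁻¹ • (P j t).mulVec v))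
              ((A' j).mulVec ((vnorm ((P j t).mulVec v))⁻¹ • (P j t).mulVec v)) /
            vnorm ((A j t).mulVec ((vnorm ((P j t).mulVec v))⁻¹ • (P j t).mulVec v)) ^ 2) := by
  obtain rfl : P = partialProd A := funext fun j => funext (hP j)
  obtain rfl : M' = partialProdDeriv A A' t n :=
    Matrix.ext fun i k => (hM' i k).unique (hasDerivAt_partialProd_apply hderiv i k)
  rw [wedge_partialProd_mulVec_deriv A' fun j hj => hdet j hj t, Finset.sum_div]
  refine Finset.sum_congr rfl fun j _ => ?_
  rw [partialProd_succ, ← mulVec_mulVec]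
  exact wedge_mulVec_div_sq_eq_normalized _ _ _ _

/-- Formula for the winding velocity of a product of `SL₂(ℝ)` curves.
Here `A 0, …, A (n-1)` are the curves (paper's `A_1, …, A_n`), `A' j` is the derivative
of `A j` at the fixed time `t`, `P j s = A (j-1) s ⋯ A 0 s` (with `P 0 s = I`) are the
partial products, `M = P n` is the full product, `M'` is the entrywise derivative of
`P n` at `t`, and `u_{j} := P j t v / ‖P j t v‖` are the normalized images of `v`. -/
theorem stmt_2 (n : ℕ) (hn : 1 ≤ n) (A : ℕ → ℝ → Matrix (Fin 2) (Fin 2) ℝ)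
    (A' : ℕ → Matrix (Fin 2) (Fin 2) ℝ) (t : ℝ)
    (hdet : ∀ j < n, ∀ s : ℝ, (A j s).det = 1)
    (hderiv : ∀ j < n, ∀ i k, HasDerivAt (fun s => A j s i k) (A' j i k) t)
    (P : ℕ → ℝ → Matrix (Fin 2) (Fin 2) ℝ)
    (hP : ∀ j s, P j s = (List.ofFn fun i : Fin j => A (i : ℕ) s).reverse.prod)
    (M' : Matrix (Fin 2) (Fin 2) ℝ)
    (hM' : ∀ i k, HasDerivAt (fun s => P n s i k) (M' i k) t)
    (v : Fin 2 → ℝ) (hv : v ≠ 0) :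
    wedge ((P n t).mulVec v) (M'.mulVec v) / vnorm ((P n t).mulVec v) ^ 2 =
      ∑ j ∈ Finset.range n,
        (vnorm ((P (j + 1) t).mulVec v) / vnorm ((P n t).mulVec v)) ^ 2 *
          (wedge ((A j t).mulVec ((vnorm ((P j t).mulVec v))⁻¹ • (P j t).mulVec v))
              ((A' j).mulVec ((vnorm ((P j t).mulVec v))⁻¹ • (P j t).mulVec v)) /
            vnorm ((A j t).mulVec ((vnorm ((P j t).mulVec v))⁻¹ • (P j t).mulVec v)) ^ 2) :=
  stmt_2_general n A A' t hdet hderiv P hP M' hM' v
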